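/- Let k ≥ 3, let W* ∈ ℝ^{m×n} be a rank-k matrix with singular value decomposition W* = Σ_{i=1}^k σ_i u_i v_i^⊤ where every σ_i < 1/(2k). Let Δ_mem ∈ ℝ^m with ‖Δ_mem‖_2 > 1 and let v ∈ ℝ^n be a unit vector with W* v = 0; set W_dis = W* + Δ_mem v^⊤. Let v_{k+1} ∈ ℝ^n be a unit vector orthogonal to v_1, …, v_k, let ũ_1, …, ũ_{k+1} ∈ ℝ^m be unit vectors, and let W_ent = Σ_{i=1}^{k} σ_i^Δ ũ_i v_i^⊤ + σ_{k+1}^Δ ũ_{k+1} v_{k+1}^⊤ with 0 ≤ σ_i^Δ ≤ σ_i + ‖Δ_mem‖_2/(k+1) for i ≤ k and 0 ≤ σ_{k+1}^Δ ≤ ‖Δ_mem‖_2/(k+1). Then ‖W_ent‖_F < ‖W_dis‖_F. -/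

import Mathlib

open Matrix

/-- The Euclidean (ℓ²) norm of a vector in `Fin n → ℝ`. -/
noncomputable def l2norm {n : ℕ} (x : Fin n → ℝ) : ℝ :=
  Real.sqrt (∑ i, (x i) ^ 2)

/-- The standard inner product on `Fin n → ℝ`. -/
def dotp {n : ℕ} (x y : Fin n → ℝ) : ℝ := ∑ i, x i * y i

/-- The squared Frobenius norm of a matrix: the sum of the squares of its entries. -/
def frobSq {m n : ℕ} (A : Matrix (Fin m) (Fin n) ℝ) : ℝ :=
  ∑ i, ∑ j, (A i j) ^ 2

/-- The Frobenius norm of a matrix. -/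
noncomputable def frobNorm {m n : ℕ} (A : Matrix (Fin m) (Fin n) ℝ) : ℝ :=
  Real.sqrt (frobSq A)

/-!
Both squared Frobenius norms are computed exactly by Pythagoras: `Σ cₗ aₗ bₗᵀ` with orthonormal
`bₗ` and unit `aₗ` has squared norm `Σ cₗ²`, and `W* v = 0` makes `W*` and `Δ_mem vᵀ` orthogonal.
With `d = ‖Δ_mem‖₂` and `c = d/(k+1)` this gives `‖W_dis‖_F² = Σ σᵢ² + d²` and
`‖W_ent‖_F² ≤ Σ (σᵢ + c)² + c²`, whose difference is
`d² - 2c Σ σᵢ - (k+1)c² > d² - c - cd = c(kd - 1) ≥ 0` because `Σ σᵢ < 1/2`.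
-/

open Finset

lemma dotp_eq_dotProduct {n : ℕ} (x y : Fin n → ℝ) : dotp x y = x ⬝ᵥ y := rfl

lemma l2norm_sq {n : ℕ} (x : Fin n → ℝ) : l2norm x ^ 2 = x ⬝ᵥ x := by
  rw [l2norm, Real.sq_sqrt (by positivity)]
  simp only [dotProduct, sq]

lemma dotProduct_self_of_l2norm_eq_one {n : ℕ} {x : Fin n → ℝ} (h : l2norm x = 1) :
    x ⬝ᵥ x = 1 := by
  rw [← l2norm_sq, h, one_pow]

lemma frobSq_eq_sum_dotProduct {m n : ℕ} (A : Matrix (Fin m) (Fin n) ℝ) :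
    frobSq A = ∑ i, A i ⬝ᵥ A i := by
  simp only [frobSq, dotProduct, sq]

lemma frobNorm_lt_frobNorm {m n : ℕ} {A B : Matrix (Fin m) (Fin n) ℝ}
    (h : frobSq A < frobSq B) : frobNorm A < frobNorm B :=
  Real.sqrt_lt_sqrt (by unfold frobSq; positivity) h

section Orthonormal

variable {α ι : Type*} [Fintype α] [Fintype ι] [DecidableEq ι]

lemma sum_smul_dotProduct_self_of_orthonormal {b : ι → α → ℝ}
    (hb : ∀ i j, b i ⬝ᵥ b j = if i = j then 1 else 0) (x : ι → ℝ) :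
    (∑ l, x l • b l) ⬝ᵥ (∑ l, x l • b l) = ∑ l, x l ^ 2 := by
  simp [sum_dotProduct, dotProduct_sum, smul_dotProduct, dotProduct_smul, hb, sq]

lemma frobSq_sum_smul_vecMulVec {m n : ℕ} {b : ι → Fin n → ℝ}
    (hb : ∀ i j, b i ⬝ᵥ b j = if i = j then 1 else 0) (c : ι → ℝ) (a : ι → Fin m → ℝ) :
    frobSq (∑ l, c l • vecMulVec (a l) (b l)) = ∑ l, c l ^ 2 * (a l ⬝ᵥ a l) := by
  have hrow : ∀ i, (∑ l, c l • vecMulVec (a l) (b l)) i = ∑ l, (c l * a l i) • b l := by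
    intro i
    ext j
    simp [Matrix.sum_apply, vecMulVec_apply, mul_assoc]
  simp only [frobSq_eq_sum_dotProduct, hrow, sum_smul_dotProduct_self_of_orthonormal hb]
  rw [Finset.sum_comm]
  simp only [dotProduct, Finset.mul_sum]
  exact sum_congr rfl fun _ _ => sum_congr rfl fun _ _ => by ring

lemma snoc_dotProduct_snoc {k : ℕ} {v : Fin k → α → ℝ} {w : α → ℝ}
    (hv : ∀ i j, v i ⬝ᵥ v j = if i = j then 1 else 0) (hw : w ⬝ᵥ w = 1)
    (hwv : ∀ i, w ⬝ᵥ v i = 0) (i j : Fin (k + 1)) :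
    Fin.snoc (α := fun _ => α → ℝ) v w i ⬝ᵥ Fin.snoc (α := fun _ => α → ℝ) v w j
      = if i = j then 1 else 0 := by
  induction i using Fin.lastCases with
  | last =>
    induction j using Fin.lastCases with
    | last => simp [hw]
    | cast j => simp [hwv, (Fin.castSucc_lt_last j).ne']
  | cast i =>
    induction j using Fin.lastCases with
    | last => simp [dotProduct_comm _ w, hwv, (Fin.castSucc_lt_last i).ne]
    | cast j => simp [hv]

end Orthonormal

lemma frobSq_add_vecMulVec_of_mulVec_eq_zero {m n : ℕ} (W : Matrix (Fin m) (Fin n) ℝ)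
    (x : Fin m → ℝ) {y : Fin n → ℝ} (hy : y ⬝ᵥ y = 1) (hWy : W *ᵥ y = 0) :
    frobSq (W + vecMulVec x y) = frobSq W + x ⬝ᵥ x := by
  have horth : ∀ i, W i ⬝ᵥ y = 0 := fun i => congrFun hWy i
  have hrow : ∀ i, (W + vecMulVec x y) i ⬝ᵥ (W + vecMulVec x y) i
      = W i ⬝ᵥ W i + x i * x i := by
    intro i
    have : (W + vecMulVec x y) i = W i + x i • y := by
      ext j
      simp [vecMulVec_apply]
    simp [this, add_dotProduct, dotProduct_add, dotProduct_comm y, horth, hy]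
  simp only [frobSq_eq_sum_dotProduct, hrow, Finset.sum_add_distrib]
  rfl

lemma sum_lt_half_of_forall_lt {k : ℕ} (hk : 1 ≤ k) {σ : Fin k → ℝ}
    (hσ : ∀ i, σ i < 1 / (2 * k)) : ∑ i, σ i < 1 / 2 := by
  have : Nonempty (Fin k) := ⟨⟨0, hk⟩⟩
  calc ∑ i, σ i < ∑ _i : Fin k, 1 / (2 * (k : ℝ)) :=
        Finset.sum_lt_sum_of_nonempty univ_nonempty fun i _ => hσ i
    _ = 1 / 2 := by
        have : (k : ℝ) ≠ 0 := by positivity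
        simp only [sum_const, card_univ, Fintype.card_fin, nsmul_eq_mul]
        field_simp

lemma sum_add_sq_add_sq_lt {k : ℕ} (hk : 1 ≤ k) {d : ℝ} (hd : 1 < d) {σ : Fin k → ℝ}
    (hσ : ∑ i, σ i < 1 / 2) :
    ∑ i, (σ i + d / (k + 1)) ^ 2 + (d / (k + 1)) ^ 2 < ∑ i, σ i ^ 2 + d ^ 2 := by
  set c := d / (k + 1)
  have hK : (1 : ℝ) ≤ k := by exact_mod_cast hk
  have hc0 : 0 < c := by positivity
  have hcd : c * (k + 1) = d := div_mul_cancel₀ _ (by positivity)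
  have hexpand : ∑ i, (σ i + c) ^ 2 = ∑ i, σ i ^ 2 + 2 * c * ∑ i, σ i + k * c ^ 2 := by
    simp only [add_sq, sum_add_distrib, ← sum_mul, ← mul_sum, sum_const, card_univ,
      Fintype.card_fin, nsmul_eq_mul]
    ring
  rw [hexpand]
  have hlin : 2 * c * ∑ i, σ i < c := by nlinarith
  have hkd : 1 ≤ k * d := by nlinarith
  nlinarith

theorem frobNorm_entangled_lt_disentangled_general (k : ℕ) (hk : 3 ≤ k) {m n : ℕ}
    (σ : Fin k → ℝ) (hσlt : ∀ i, σ i < 1 / (2 * k))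
    (u : Fin k → Fin m → ℝ) (hu : ∀ i j, dotp (u i) (u j) = if i = j then 1 else 0)
    (v : Fin k → Fin n → ℝ) (hv : ∀ i j, dotp (v i) (v j) = if i = j then 1 else 0)
    (Wstar : Matrix (Fin m) (Fin n) ℝ)
    (hWstar : Wstar = ∑ i, σ i • vecMulVec (u i) (v i))
    (Δmem : Fin m → ℝ) (hΔ : 1 < l2norm Δmem)
    (v0 : Fin n → ℝ) (hv0 : l2norm v0 = 1) (hWv0 : Wstar.mulVec v0 = 0)
    (vlast : Fin n → ℝ) (hvlast : l2norm vlast = 1)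
    (hvorth : ∀ i, dotp vlast (v i) = 0)
    (ut : Fin (k + 1) → Fin m → ℝ) (hut : ∀ i, l2norm (ut i) = 1)
    (σΔ : Fin (k + 1) → ℝ)
    (hσΔ1 : ∀ i : Fin k,
      0 ≤ σΔ i.castSucc ∧ σΔ i.castSucc ≤ σ i + l2norm Δmem / (k + 1))
    (hσΔ2 : 0 ≤ σΔ (Fin.last k) ∧ σΔ (Fin.last k) ≤ l2norm Δmem / (k + 1)) :
    frobNorm ((∑ i : Fin k, σΔ i.castSucc • vecMulVec (ut i.castSucc) (v i))
        + σΔ (Fin.last k) • vecMulVec (ut (Fin.last k)) vlast)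
      < frobNorm (Wstar + vecMulVec Δmem v0) := by
  simp only [dotp_eq_dotProduct] at hu hv hvorth
  have hb := snoc_dotProduct_snoc hv (dotProduct_self_of_l2norm_eq_one hvlast) hvorth
  have hent : (∑ i : Fin k, σΔ i.castSucc • vecMulVec (ut i.castSucc) (v i))
        + σΔ (Fin.last k) • vecMulVec (ut (Fin.last k)) vlast
      = ∑ l, σΔ l • vecMulVec (ut l) (Fin.snoc (α := fun _ => Fin n → ℝ) v vlast l) := by
    simp [Fin.sum_univ_castSucc]
  apply frobNorm_lt_frobNorm
  calc _ = ∑ l, σΔ l ^ 2 := by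
        simp [hent, frobSq_sum_smul_vecMulVec hb, dotProduct_self_of_l2norm_eq_one (hut _)]
    _ ≤ ∑ i : Fin k, (σ i + l2norm Δmem / (k + 1)) ^ 2 + (l2norm Δmem / (k + 1)) ^ 2 := by
        rw [Fin.sum_univ_castSucc]
        gcongr with i
        exacts [(hσΔ1 i).1, (hσΔ1 i).2, hσΔ2.1, hσΔ2.2]
    _ < ∑ i, σ i ^ 2 + l2norm Δmem ^ 2 :=
        sum_add_sq_add_sq_lt (by omega) hΔ (sum_lt_half_of_forall_lt (by omega) hσlt)
    _ = _ := by
        rw [frobSq_add_vecMulVec_of_mulVec_eq_zero _ _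
          (dotProduct_self_of_l2norm_eq_one hv0) hWv0, hWstar, frobSq_sum_smul_vecMulVec hv,
          l2norm_sq]
        simp [hu]

/-- The entangled memorizing solution has strictly smaller Frobenius norm than the
disentangled one. `W* = Σ_{i=1}^k σᵢ uᵢ vᵢᵀ` is a rank-`k` SVD with `σᵢ < 1/(2k)` and
`k ≥ 3`; `W_dis = W* + Δ_mem vᵀ` stores the memorization `Δ_mem` (with `‖Δ_mem‖₂ > 1`)
along a unit direction `v` with `W* v = 0`; the entangled solution
`W_ent = Σ_{i=1}^k σᵢᴰ ũᵢ vᵢᵀ + σ_{k+1}ᴰ ũ_{k+1} v_{k+1}ᵀ` redistributes the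
memorization across the generalizing directions, with `σᵢᴰ ≤ σᵢ + ‖Δ_mem‖₂/(k+1)` and
`σ_{k+1}ᴰ ≤ ‖Δ_mem‖₂/(k+1)`. Then `‖W_ent‖_F < ‖W_dis‖_F`. -/
theorem frobNorm_entangled_lt_disentangled (k : ℕ) (hk : 3 ≤ k) {m n : ℕ}
    (σ : Fin k → ℝ) (hσpos : ∀ i, 0 < σ i) (hσlt : ∀ i, σ i < 1 / (2 * k))
    (u : Fin k → Fin m → ℝ) (hu : ∀ i j, dotp (u i) (u j) = if i = j then 1 else 0)
    (v : Fin k → Fin n → ℝ) (hv : ∀ i j, dotp (v i) (v j) = if i = j then 1 else 0)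
    (Wstar : Matrix (Fin m) (Fin n) ℝ)
    (hWstar : Wstar = ∑ i, σ i • vecMulVec (u i) (v i))
    (hrank : Wstar.rank = k)
    (Δmem : Fin m → ℝ) (hΔ : 1 < l2norm Δmem)
    (v0 : Fin n → ℝ) (hv0 : l2norm v0 = 1) (hWv0 : Wstar.mulVec v0 = 0)
    (vlast : Fin n → ℝ) (hvlast : l2norm vlast = 1)
    (hvorth : ∀ i, dotp vlast (v i) = 0)
    (ut : Fin (k + 1) → Fin m → ℝ) (hut : ∀ i, l2norm (ut i) = 1)
    (σΔ : Fin (k + 1) → ℝ)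
    (hσΔ1 : ∀ i : Fin k,
      0 ≤ σΔ i.castSucc ∧ σΔ i.castSucc ≤ σ i + l2norm Δmem / (k + 1))
    (hσΔ2 : 0 ≤ σΔ (Fin.last k) ∧ σΔ (Fin.last k) ≤ l2norm Δmem / (k + 1)) :
    frobNorm ((∑ i : Fin k, σΔ i.castSucc • vecMulVec (ut i.castSucc) (v i))
        + σΔ (Fin.last k) • vecMulVec (ut (Fin.last k)) vlast)
      < frobNorm (Wstar + vecMulVec Δmem v0) :=
  frobNorm_entangled_lt_disentangled_general k hk σ hσlt u hu v hv Wstar hWstar Δmem hΔ v0 hv0 hWv0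
    vlast hvlast hvorth ut hut σΔ hσΔ1 hσΔ2
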